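/- arXiv:2105.04351 — 6 statements merged into one kernel-verified Lean document; each statement's English description precedes it below -/
import Mathlib

section
/- If N = p·q for distinct primes p, q, λ = lcm(p−1, q−1), and r is a unit modulo N², then r^(N·λ) ≡ 1 (mod N²). -/
lemma aux_pow (r m k : ℕ) (hr : Nat.Coprime r m)
    (hd : Nat.totient m ∣ k) : r ^ k ≡ 1 [MOD m] := by
  obtain ⟨c, rfl⟩ := hd
  calc r ^ (Nat.totient m * c) = (r ^ Nat.totient m) ^ c := by rw [pow_mul]
    _ ≡ 1 ^ c [MOD m] := (Nat.ModEq.pow_totient hr).pow c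
    _ = 1 := one_pow c

/-- If `N = p·q` for distinct primes `p, q`, `λ = lcm (p-1) (q-1)`, and `r` is coprime to
`N` (equivalently a unit mod `N²`), then `r ^ (N·λ) ≡ 1 (mod N²)`. -/
theorem stmt0 (p q : ℕ) (hp : p.Prime) (hq : q.Prime) (hpq : p ≠ q)
    (N lam : ℕ) (hN : N = p * q) (hlam : lam = Nat.lcm (p - 1) (q - 1))
    (r : ℕ) (hr : Nat.Coprime r N) :
    r ^ (N * lam) ≡ 1 [MOD N ^ 2] := by
  subst hN hlam
  have hrp : Nat.Coprime r p := Nat.Coprime.coprime_dvd_right (dvd_mul_right p q) hr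
  have hrq : Nat.Coprime r q := Nat.Coprime.coprime_dvd_right (dvd_mul_left q p) hr
  have hp2 : Nat.totient (p ^ 2) = p * (p - 1) := by
    rw [Nat.totient_prime_pow hp (by norm_num)]; ring
  have hq2 : Nat.totient (q ^ 2) = q * (q - 1) := by
    rw [Nat.totient_prime_pow hq (by norm_num)]; ring
  have hmodp : r ^ (p * q * Nat.lcm (p - 1) (q - 1)) ≡ 1 [MOD p ^ 2] := by
    refine aux_pow r _ _ (hrp.pow_right 2) ?_
    rw [hp2]
    calc p * (p - 1) ∣ p * Nat.lcm (p - 1) (q - 1) :=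
          mul_dvd_mul_left p (Nat.dvd_lcm_left _ _)
      _ ∣ p * q * Nat.lcm (p - 1) (q - 1) := by
          rw [mul_assoc]; exact mul_dvd_mul_left p (dvd_mul_left _ q)
  have hmodq : r ^ (p * q * Nat.lcm (p - 1) (q - 1)) ≡ 1 [MOD q ^ 2] := by
    refine aux_pow r _ _ (hrq.pow_right 2) ?_
    rw [hq2]
    calc q * (q - 1) ∣ q * Nat.lcm (p - 1) (q - 1) :=
          mul_dvd_mul_left q (Nat.dvd_lcm_right _ _)
      _ ∣ p * q * Nat.lcm (p - 1) (q - 1) := by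
          rw [mul_comm p q, mul_assoc]; exact mul_dvd_mul_left q (dvd_mul_left _ p)
  have hcop : Nat.Coprime (p ^ 2) (q ^ 2) :=
    Nat.Coprime.pow 2 2 ((Nat.coprime_primes hp hq).2 hpq)
  have := Nat.modEq_and_modEq_iff_modEq_mul hcop |>.1 ⟨hmodp, hmodq⟩
  rwa [show p ^ 2 * q ^ 2 = (p * q) ^ 2 by ring] at this
end

section
/- For any message m ∈ ℤ/Nℤ and any randomness r coprime to N, the modified Paillier ciphertext satisfies E'(m,r) = (N·(μ⁻¹ mod N) + 1)^m mod N²; hence anyone knowing only the public key (N, μ) can compute the unique ciphertext of any message without knowing λ. -/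
lemma pow_eq_one_of_totient_dvd {x n e : ℕ} (h : Nat.Coprime x n) (hd : n.totient ∣ e) :
    x ^ e ≡ 1 [MOD n] := by
  obtain ⟨c, rfl⟩ := hd
  calc x ^ (n.totient * c) = (x ^ n.totient) ^ c := by rw [pow_mul]
    _ ≡ 1 ^ c [MOD n] := (Nat.ModEq.pow_totient h).pow c
    _ = 1 := one_pow c

/-- Forgery of modified Paillier ciphertexts from the public key alone: for any message `m`
and randomness `r` coprime to `N`, `E'(m,r) = g_p^(m·λ)·r^(N·λ) ≡ (N·(μ⁻¹ mod N) + 1)^m (mod N²)`,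
where `μ = (L(g_p^λ mod N²))⁻¹ mod N` and `k` (with `k < N`, `μ·k ≡ 1 (mod N)`) is `μ⁻¹ mod N`. -/
theorem stmt4 (p q : ℕ) (hp : p.Prime) (hq : q.Prime) (hpq : p ≠ q)
    (N lam : ℕ) (hN : N = p * q) (hlam : lam = Nat.lcm (p - 1) (q - 1))
    (gp : ℕ) (hgp : Nat.Coprime gp N)
    (μ k : ℕ)
    (hμ : μ * ((gp ^ lam % N ^ 2 - 1) / N) ≡ 1 [MOD N])
    (hk : k < N) (hμk : μ * k ≡ 1 [MOD N])
    (m r : ℕ) (hr : Nat.Coprime r N) :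
    gp ^ (m * lam) * r ^ (N * lam) ≡ (N * k + 1) ^ m [MOD N ^ 2] := by
  have hp2 : 2 ≤ p := hp.two_le
  have hq2 : 2 ≤ q := hq.two_le
  have hN1 : 1 < N := by subst hN; nlinarith
  have hNpos : 0 < N := by omega
  have hcpq : Nat.Coprime p q := (Nat.coprime_primes hp hq).mpr hpq
  have hdvd_p_lam : (p - 1) ∣ lam := hlam ▸ Nat.dvd_lcm_left _ _
  have hdvd_q_lam : (q - 1) ∣ lam := hlam ▸ Nat.dvd_lcm_right _ _
  have htp2 : (p ^ 2).totient = p * (p - 1) := by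
    rw [Nat.totient_prime_pow hp (by norm_num)]; ring_nf
  have htq2 : (q ^ 2).totient = q * (q - 1) := by
    rw [Nat.totient_prime_pow hq (by norm_num)]; ring_nf
  -- key: any x coprime to N satisfies x^(N*lam) ≡ 1 mod N^2
  have key : ∀ x : ℕ, Nat.Coprime x N → x ^ (N * lam) ≡ 1 [MOD N ^ 2] := by
    intro x hx
    have hxp : Nat.Coprime x p := Nat.Coprime.coprime_dvd_right (hN ▸ dvd_mul_right p q) hx
    have hxq : Nat.Coprime x q := Nat.Coprime.coprime_dvd_right (hN ▸ dvd_mul_left q p) hx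
    have h1 : x ^ (N * lam) ≡ 1 [MOD p ^ 2] := by
      apply pow_eq_one_of_totient_dvd (hxp.pow_right 2)
      rw [htp2, hN]
      exact mul_dvd_mul (dvd_mul_right p q) hdvd_p_lam
    have h2 : x ^ (N * lam) ≡ 1 [MOD q ^ 2] := by
      apply pow_eq_one_of_totient_dvd (hxq.pow_right 2)
      rw [htq2, hN]
      exact mul_dvd_mul (dvd_mul_left q p) hdvd_q_lam
    have hcp2 : Nat.Coprime (p ^ 2) (q ^ 2) := Nat.Coprime.pow 2 2 hcpq
    have := (Nat.modEq_and_modEq_iff_modEq_mul hcp2).mp ⟨h1, h2⟩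
    rwa [← mul_pow, ← hN] at this
  -- gp^lam ≡ 1 mod N
  have hgpp : Nat.Coprime gp p := Nat.Coprime.coprime_dvd_right (hN ▸ dvd_mul_right p q) hgp
  have hgpq : Nat.Coprime gp q := Nat.Coprime.coprime_dvd_right (hN ▸ dvd_mul_left q p) hgp
  have h1N : gp ^ lam ≡ 1 [MOD N] := by
    have h1 : gp ^ lam ≡ 1 [MOD p] := by
      apply pow_eq_one_of_totient_dvd hgpp
      rw [Nat.totient_prime hp]; exact hdvd_p_lam
    have h2 : gp ^ lam ≡ 1 [MOD q] := by
      apply pow_eq_one_of_totient_dvd hgpq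
      rw [Nat.totient_prime hq]; exact hdvd_q_lam
    have := (Nat.modEq_and_modEq_iff_modEq_mul hcpq).mp ⟨h1, h2⟩
    rwa [hN]
  set G := gp ^ lam % N ^ 2 with hG
  have hN2pos : 0 < N ^ 2 := by positivity
  have hGlt : G < N ^ 2 := Nat.mod_lt _ hN2pos
  have hGmodN : G % N = 1 := by
    have : G % N = gp ^ lam % N := Nat.mod_mod_of_dvd _ (dvd_pow_self N two_ne_zero)
    rw [this]
    have := h1N
    unfold Nat.ModEq at this
    rw [this, Nat.mod_eq_of_lt hN1]
  set t := G / N with ht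
  have hGeq : G = N * t + 1 := by
    have h := Nat.div_add_mod G N
    rw [← ht, hGmodN] at h
    omega
  have htlt : t < N := by
    have h : N * t + 1 < N * N := by rw [← hGeq]; calc G < N ^ 2 := hGlt
                                                    _ = N * N := sq N
    have h2 : N * t < N * N := by linarith
    exact Nat.lt_of_mul_lt_mul_left h2
  have hμt : μ * t ≡ 1 [MOD N] := by
    have : (G - 1) / N = t := by
      rw [show G - 1 = N * t by omega, Nat.mul_div_cancel_left _ hNpos]
    rwa [this] at hμ
  have htk : t = k := by
    have h1 : t * (μ * k) ≡ t * 1 [MOD N] := Nat.ModEq.mul_left t hμk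
    have h2 : (μ * t) * k ≡ 1 * k [MOD N] := Nat.ModEq.mul_right k hμt
    have h3 : t ≡ k [MOD N] := by
      calc t = t * 1 := (mul_one t).symm
        _ ≡ t * (μ * k) [MOD N] := h1.symm
        _ = (μ * t) * k := by ring
        _ ≡ 1 * k [MOD N] := h2
        _ = k := one_mul k
    have := h3
    unfold Nat.ModEq at this
    rwa [Nat.mod_eq_of_lt htlt, Nat.mod_eq_of_lt hk] at this
  -- assemble
  have hGG : gp ^ lam ≡ N * k + 1 [MOD N ^ 2] := by
    have : gp ^ lam ≡ G [MOD N ^ 2] := (Nat.mod_modEq _ _).symm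
    rwa [hGeq, htk] at this
  calc gp ^ (m * lam) * r ^ (N * lam)
      = (gp ^ lam) ^ m * r ^ (N * lam) := by rw [← pow_mul, mul_comm lam m]
    _ ≡ (N * k + 1) ^ m * 1 [MOD N ^ 2] := Nat.ModEq.mul (hGG.pow m) (key r hr)
    _ = (N * k + 1) ^ m := mul_one _
end

section
/- Decryption is correct for the modified Paillier scheme: if c = g_p^(m·λ)·r^(N·λ) mod N² with 0 ≤ m < N, then L(c)·μ ≡ m (mod N), where L(x) = (x−1)/N and μ = (L(g_p^λ mod N²))⁻¹ mod N. -/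
private lemma binom_aux (N k : ℕ) : ∀ m : ℕ, (1 + k * N) ^ m ≡ 1 + m * (k * N) [MOD N ^ 2]
  | 0 => by simpa using Nat.ModEq.refl 1
  | (m + 1) => by
    have ih := binom_aux N k m
    calc (1 + k * N) ^ (m + 1) = (1 + k * N) ^ m * (1 + k * N) := by ring
      _ ≡ (1 + m * (k * N)) * (1 + k * N) [MOD N ^ 2] := ih.mul_right _
      _ = (1 + (m + 1) * (k * N)) + (m * k * k) * N ^ 2 := by ring
      _ ≡ 1 + (m + 1) * (k * N) [MOD N ^ 2] := by
          show _ % _ = _ % _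
          rw [Nat.add_mul_mod_self_right]

private lemma fermat_aux (P a e : ℕ) (hP : P.Prime) (ha : a.Coprime P)
    (hdvd : P - 1 ∣ e) : a ^ e ≡ 1 [MOD P] := by
  obtain ⟨t, ht⟩ := hdvd
  have h := Nat.ModEq.pow_totient ha
  rw [Nat.totient_prime hP] at h
  calc a ^ e = (a ^ (P - 1)) ^ t := by rw [← pow_mul, ← ht]
    _ ≡ 1 ^ t [MOD P] := h.pow t
    _ = 1 := one_pow t

private lemma fermat_sq_aux (P a e : ℕ) (hP : P.Prime) (ha : a.Coprime P)
    (hdvd : P * (P - 1) ∣ e) : a ^ e ≡ 1 [MOD P ^ 2] := by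
  obtain ⟨t, ht⟩ := hdvd
  have ha2 : a.Coprime (P ^ 2) := ha.pow_right 2
  have h := Nat.ModEq.pow_totient ha2
  rw [Nat.totient_prime_pow hP (by norm_num : 0 < 2)] at h
  norm_num at h
  calc a ^ e = (a ^ (P * (P - 1))) ^ t := by rw [← pow_mul, ← ht]
    _ ≡ 1 ^ t [MOD P ^ 2] := h.pow t
    _ = 1 := one_pow t

/-- Decryption correctness of modified Paillier: if `c = g_p^(m·λ)·r^(N·λ) mod N²` with
`0 ≤ m < N`, then `L(c)·μ ≡ m (mod N)`, where `L(x) = (x-1)/N` and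
`μ = (L(g_p^λ mod N²))⁻¹ mod N`. -/
theorem stmt7 (p q : ℕ) (hp : p.Prime) (hq : q.Prime) (hpq : p ≠ q)
    (N lam : ℕ) (hN : N = p * q) (hlam : lam = Nat.lcm (p - 1) (q - 1))
    (gp r : ℕ) (hgp : Nat.Coprime gp N) (hr : Nat.Coprime r N)
    (hord : Nat.gcd ((gp ^ lam % N ^ 2 - 1) / N) N = 1)
    (μ : ℕ) (hμ : μ * ((gp ^ lam % N ^ 2 - 1) / N) ≡ 1 [MOD N])
    (m c : ℕ) (hm : m < N)
    (hc : c = gp ^ (m * lam) * r ^ (N * lam) % N ^ 2) :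
    ((c - 1) / N) * μ ≡ m [MOD N] := by
  have hp2 := hp.two_le
  have hq2 := hq.two_le
  have hN1 : 1 < N := by rw [hN]; nlinarith
  have hN0 : 0 < N := by omega
  have hcop_pq : Nat.Coprime p q := (Nat.coprime_primes hp hq).mpr hpq
  have hgp_p : Nat.Coprime gp p := Nat.Coprime.coprime_dvd_right ⟨q, hN⟩ hgp
  have hgp_q : Nat.Coprime gp q := Nat.Coprime.coprime_dvd_right ⟨p, by rw [hN]; ring⟩ hgp
  have hr_p : Nat.Coprime r p := Nat.Coprime.coprime_dvd_right ⟨q, hN⟩ hr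
  have hr_q : Nat.Coprime r q := Nat.Coprime.coprime_dvd_right ⟨p, by rw [hN]; ring⟩ hr
  -- Step A : gp ^ lam ≡ 1 [MOD N]
  have hA : gp ^ lam ≡ 1 [MOD N] := by
    rw [hN]
    refine (Nat.modEq_and_modEq_iff_modEq_mul hcop_pq).mp ⟨?_, ?_⟩
    · exact fermat_aux p gp lam hp hgp_p (hlam ▸ Nat.dvd_lcm_left _ _)
    · exact fermat_aux q gp lam hq hgp_q (hlam ▸ Nat.dvd_lcm_right _ _)
  -- Step B : r ^ (N * lam) ≡ 1 [MOD N ^ 2]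
  have hB : r ^ (N * lam) ≡ 1 [MOD N ^ 2] := by
    have hsq : N ^ 2 = p ^ 2 * q ^ 2 := by rw [hN]; ring
    rw [hsq]
    refine (Nat.modEq_and_modEq_iff_modEq_mul (Nat.Coprime.pow 2 2 hcop_pq)).mp ⟨?_, ?_⟩
    · refine fermat_sq_aux p r _ hp hr_p ?_
      have : (p - 1) ∣ q * lam := Dvd.dvd.mul_left (hlam ▸ Nat.dvd_lcm_left _ _) q
      have := mul_dvd_mul_left p this
      rwa [hN, mul_assoc] 
    · refine fermat_sq_aux q r _ hq hr_q ?_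
      have h1 : (q - 1) ∣ p * lam := Dvd.dvd.mul_left (hlam ▸ Nat.dvd_lcm_right _ _) p
      have h2 := mul_dvd_mul_left q h1
      have : q * (p * lam) = N * lam := by rw [hN]; ring
      rwa [this] at h2
  -- x = gp ^ lam % N ^ 2
  set x := gp ^ lam % N ^ 2 with hxdef
  have hxmod : x ≡ gp ^ lam [MOD N ^ 2] := Nat.mod_modEq _ _
  have hx1modN : x ≡ 1 [MOD N] :=
    ((hxmod.of_dvd (dvd_pow_self N two_ne_zero))).trans hA
  have hxne : x ≠ 0 := by
    intro h0
    have hdvd : N ^ 2 ∣ gp ^ lam := Nat.dvd_of_mod_eq_zero h0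
    have hcop : Nat.Coprime (gp ^ lam) (N ^ 2) := (hgp.pow_left lam).pow_right 2
    have : N ^ 2 ∣ 1 := hcop ▸ Nat.dvd_gcd hdvd dvd_rfl
    have := Nat.le_of_dvd one_pos this
    nlinarith
  have hx1 : 1 ≤ x := Nat.one_le_iff_ne_zero.mpr hxne
  set k := (x - 1) / N with hkdef
  have hNdvd : N ∣ x - 1 := (Nat.modEq_iff_dvd' hx1).mp hx1modN.symm
  have hxeq : x = 1 + k * N := by
    have h2 : k * N = x - 1 := Nat.div_mul_cancel hNdvd
    clear_value x k
    omega
  -- Step C+D : c ≡ 1 + m * (k * N) [MOD N ^ 2]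
  have hC : c ≡ 1 + m * (k * N) [MOD N ^ 2] := by
    have h1 : gp ^ (m * lam) ≡ x ^ m [MOD N ^ 2] := by
      have : gp ^ (m * lam) = (gp ^ lam) ^ m := by rw [← pow_mul, mul_comm]
      rw [this]
      exact (hxmod.symm).pow m
    calc c = gp ^ (m * lam) * r ^ (N * lam) % N ^ 2 := hc
      _ ≡ gp ^ (m * lam) * r ^ (N * lam) [MOD N ^ 2] := Nat.mod_modEq _ _
      _ ≡ x ^ m * 1 [MOD N ^ 2] := h1.mul hB
      _ = (1 + k * N) ^ m := by rw [mul_one, hxeq]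
      _ ≡ 1 + m * (k * N) [MOD N ^ 2] := binom_aux N k m
  -- c ≡ 1 [MOD N] and c ≥ 1
  have hc1modN : c ≡ 1 [MOD N] := by
    have h1 : c ≡ 1 + m * (k * N) [MOD N] := hC.of_dvd (dvd_pow_self N two_ne_zero)
    have h2 : 1 + m * (k * N) ≡ 1 [MOD N] := by
      show (1 + m * (k * N)) % N = 1 % N
      rw [show 1 + m * (k * N) = 1 + m * k * N by ring, Nat.add_mul_mod_self_right]
    exact h1.trans h2
  have hcne : c ≠ 0 := by
    intro h0
    have : (0 : ℕ) % N = 1 % N := h0 ▸ hc1modN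
    rw [Nat.zero_mod, Nat.one_mod_eq_one.mpr (by omega)] at this
    exact one_ne_zero this.symm
  have hc1 : 1 ≤ c := Nat.one_le_iff_ne_zero.mpr hcne
  set s := (c - 1) / N with hsdef
  have hNdvdc : N ∣ c - 1 := (Nat.modEq_iff_dvd' hc1).mp hc1modN.symm
  have hceq : c = 1 + s * N := by
    have h2 : s * N = c - 1 := Nat.div_mul_cancel hNdvdc
    clear_value s
    omega
  -- cancel
  have hcancel : s ≡ m * k [MOD N] := by
    have h1 : 1 + s * N ≡ 1 + m * k * N [MOD N * N] := by
      have := hC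
      rw [hceq] at this
      rw [← mul_assoc] at this
      rwa [pow_two] at this
    have h2 : s * N ≡ m * k * N [MOD N * N] := Nat.ModEq.add_left_cancel' 1 h1
    exact Nat.ModEq.mul_right_cancel' (by omega) h2
  calc s * μ ≡ m * k * μ [MOD N] := hcancel.mul_right μ
    _ = m * (μ * k) := by ring
    _ ≡ m * 1 [MOD N] := hμ.mul_left m
    _ = m := mul_one m
end

section
/- Broker matching correctness: if x' = g^(−t)·E'(−r·x) and v' = g^(t)·E'(r·v + r_v) (all modulo N²), then D'(x'·v') ≡ r·(v − x) + r_v (mod N), where D' is the public modified-Paillier decryption. -/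
/-- Broker matching correctness: if `x' = g^(-t)·E'(-r·x)` and `v' = g^(t)·E'(r·v + r_v)`
(with `E'(m) = h^m`, `h = g_p^λ` deterministic modified Paillier, `D'(E'(m)) = m mod N`),
then `D'(x'·v') = r·(v - x) + r_v mod N`. -/
theorem stmt14 (N : ℕ)
    (h g : (ZMod (N ^ 2))ˣ) (D' : (ZMod (N ^ 2))ˣ → ZMod N)
    (hD : ∀ m : ℤ, D' (h ^ m) = (m : ZMod N))
    (t r x v rv : ℤ)
    (x' v' : (ZMod (N ^ 2))ˣ)
    (hx' : x' = g ^ (-t) * h ^ (-(r * x)))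
    (hv' : v' = g ^ t * h ^ (r * v + rv)) :
    D' (x' * v') = ((r * (v - x) + rv : ℤ) : ZMod N) := by
  have key : x' * v' = h ^ (r * (v - x) + rv) := by
    rw [hx', hv']
    rw [mul_mul_mul_comm, ← zpow_add, neg_add_cancel, zpow_zero, one_mul, ← zpow_add]
    ring_nf
  rw [key, hD]
end

section
/- Rider location recovery in lpRide: given the blinded ride-request ciphertext ĉ_u⁺[i] = g^(−ε_i)·E'(c_u[i]) mod N² and knowledge of g^(−ε_i), one recovers c_u[i] mod N as D'(ĉ_u⁺[i]·g^(ε_i)), where D' is the public modified-Paillier decryption; if 0 ≤ c_u[i] < N this determines the location coordinate exactly. -/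
/-- Rider location recovery in lpRide: given `chat = g^(-ε)·E'(c_u)` (with `E'(m) = h^m`
deterministic modified Paillier, public decryption `D'` with `D'(E'(m)) = m mod N`) and
knowledge of `g^(-ε)`, one recovers `c_u mod N` as `D'(chat·g^ε)`; if `0 ≤ c_u < N` this
determines the location coordinate exactly. -/
theorem stmt16 (N : ℕ) [NeZero N]
    (h g : (ZMod (N ^ 2))ˣ) (D' : (ZMod (N ^ 2))ˣ → ZMod N)
    (hD : ∀ m : ℤ, D' (h ^ m) = (m : ZMod N))
    (ε : ℤ) (cu : ℕ)
    (chat : (ZMod (N ^ 2))ˣ) (hchat : chat = g ^ (-ε) * h ^ (cu : ℤ)) :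
    D' (chat * g ^ ε) = (cu : ZMod N) ∧ (cu < N → (D' (chat * g ^ ε)).val = cu) := by
  have key : chat * g ^ ε = h ^ (cu : ℤ) := by
    rw [hchat, mul_comm (g ^ (-ε)) _, mul_assoc, zpow_neg, inv_mul_cancel, mul_one]
  have h1 : D' (chat * g ^ ε) = (cu : ZMod N) := by
    rw [key, hD]; push_cast; ring
  refine ⟨h1, fun hcu => ?_⟩
  rw [h1, ZMod.val_natCast_of_lt hcu]
end

section
/- If g_p is a unit mod N² with gcd(L(g_p^λ mod N²), N) = 1 (where L(x) = (x−1)/N), then the multiplicative order of g_p modulo N² is a multiple of N. -/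
/-- `(1+x)^m ≡ 1 + m*x` modulo `x^2`. -/
lemma aux_binom (x : ℤ) (m : ℕ) : x ^ 2 ∣ (1 + x) ^ m - (1 + m * x) := by
  induction m with
  | zero => simp
  | succ n ih =>
    have h : (1 + x) ^ (n + 1) - (1 + (↑(n + 1) : ℤ) * x)
        = ((1 + x) ^ n - (1 + n * x)) * (1 + x) + n * x ^ 2 := by
      push_cast; ring
    rw [h]
    exact dvd_add (ih.mul_right _) (dvd_mul_left _ _)

/-- If `g_p` is a unit mod `N²` with `gcd(L(g_p^λ mod N²), N) = 1` (where `L(x) = (x-1)/N`),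
then the multiplicative order of `g_p` modulo `N²` is a multiple of `N`. -/
theorem stmt18 (p q : ℕ) (hp : p.Prime) (hq : q.Prime) (hpq : p ≠ q)
    (N lam : ℕ) (hN : N = p * q) (hlam : lam = Nat.lcm (p - 1) (q - 1))
    (gp : ℕ) (hgp : Nat.Coprime gp (N ^ 2))
    (hord : Nat.gcd ((gp ^ lam % N ^ 2 - 1) / N) N = 1) :
    N ∣ orderOf ((gp : ZMod (N ^ 2))) := by
  have hN0 : N ≠ 0 := by
    rw [hN]; exact Nat.mul_ne_zero hp.pos.ne' hq.pos.ne'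
  have hN1 : 1 < N := by
    rw [hN]
    calc 1 < 2 * 2 := by norm_num
    _ ≤ p * q := Nat.mul_le_mul hp.two_le hq.two_le
  have hN2 : 1 < N ^ 2 := Nat.one_lt_pow two_ne_zero hN1
  -- gp coprime to N
  have hcopN : Nat.Coprime gp N :=
    Nat.Coprime.coprime_dvd_right (dvd_pow_self N two_ne_zero) hgp
  -- gp ^ lam ≡ 1 [MOD N]
  have hmodN : gp ^ lam ≡ 1 [MOD N] := by
    have hcp : Nat.Coprime gp p := hcopN.coprime_dvd_right ⟨q, hN⟩
    have hcq : Nat.Coprime gp q := hcopN.coprime_dvd_right ⟨p, by rw [hN, mul_comm]⟩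
    have hp1 : gp ^ (p - 1) ≡ 1 [MOD p] := by
      have := Nat.ModEq.pow_totient hcp
      rwa [Nat.totient_prime hp] at this
    have hq1 : gp ^ (q - 1) ≡ 1 [MOD q] := by
      have := Nat.ModEq.pow_totient hcq
      rwa [Nat.totient_prime hq] at this
    have hdp : (p - 1) ∣ lam := hlam ▸ Nat.dvd_lcm_left _ _
    have hdq : (q - 1) ∣ lam := hlam ▸ Nat.dvd_lcm_right _ _
    have h1 : gp ^ lam ≡ 1 [MOD p] := by
      obtain ⟨c, hc⟩ := hdp
      calc gp ^ lam = (gp ^ (p - 1)) ^ c := by rw [← pow_mul, ← hc]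
      _ ≡ 1 ^ c [MOD p] := hp1.pow c
      _ = 1 := one_pow c
    have h2 : gp ^ lam ≡ 1 [MOD q] := by
      obtain ⟨c, hc⟩ := hdq
      calc gp ^ lam = (gp ^ (q - 1)) ^ c := by rw [← pow_mul, ← hc]
      _ ≡ 1 ^ c [MOD q] := hq1.pow c
      _ = 1 := one_pow c
    have hcopq : Nat.Coprime p q := (Nat.coprime_primes hp hq).mpr hpq
    rw [hN]
    exact (Nat.modEq_and_modEq_iff_modEq_mul hcopq).mp ⟨h1, h2⟩
  -- the residue r = gp^lam % N²
  set r : ℕ := gp ^ lam % N ^ 2 with hr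
  have hrmod : gp ^ lam ≡ r [MOD N ^ 2] := (Nat.mod_modEq _ _).symm
  have hr1 : 1 ≤ r := by
    rcases Nat.eq_zero_or_pos r with h0 | h
    · exfalso
      have hdv : N ^ 2 ∣ gp ^ lam := Nat.dvd_of_mod_eq_zero h0
      have hcop : Nat.Coprime (gp ^ lam) (N ^ 2) := hgp.pow_left lam
      have : N ^ 2 ∣ Nat.gcd (gp ^ lam) (N ^ 2) := Nat.dvd_gcd hdv dvd_rfl
      rw [hcop] at this
      have := Nat.le_of_dvd one_pos this
      omega
    · exact h
  have hNdvd : N ∣ r - 1 := by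
    have h1 : r ≡ 1 [MOD N] := by
      have : gp ^ lam ≡ r [MOD N] :=
        hrmod.of_dvd (dvd_pow_self N two_ne_zero)
      exact this.symm.trans hmodN
    exact (Nat.modEq_iff_dvd' hr1).mp h1.symm
  set k : ℕ := (r - 1) / N with hk
  have hrk : r = 1 + N * k := by
    have h := Nat.mul_div_cancel' hNdvd
    rw [hk, h]
    omega
  have hkN : Nat.Coprime N k := Nat.Coprime.symm hord
  -- main step
  set d : ℕ := orderOf ((gp : ZMod (N ^ 2))) with hd
  have hpow : ((gp : ZMod (N ^ 2))) ^ d = 1 := pow_orderOf_eq_one _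
  have hnat : gp ^ (lam * d) ≡ 1 [MOD N ^ 2] := by
    have : ((gp ^ (lam * d) : ℕ) : ZMod (N ^ 2)) = ((1 : ℕ) : ZMod (N ^ 2)) := by
      push_cast
      rw [mul_comm lam d, pow_mul, hpow, one_pow]
    exact (ZMod.natCast_eq_natCast_iff _ _ _).mp this
  -- move to ℤ
  have hint1 : ((N : ℤ) ^ 2) ∣ (1 : ℤ) - (gp : ℤ) ^ (lam * d) := by
    have := (Nat.modEq_iff_dvd (n := N ^ 2)).mp hnat
    push_cast at this ⊢
    exact this
  have hint2 : ((gp : ℤ)) ^ lam ≡ 1 + N * k [ZMOD (N : ℤ) ^ 2] := by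
    have h1 : ((gp : ℤ)) ^ lam ≡ (r : ℤ) [ZMOD (N : ℤ) ^ 2] := by
      have := (Nat.modEq_iff_dvd (n := N ^ 2)).mp hrmod
      rw [Int.modEq_iff_dvd]
      push_cast at this ⊢
      exact this
    rw [hrk] at h1
    push_cast at h1
    exact h1
  have hint3 : ((1 : ℤ) + N * k) ^ d ≡ 1 + d * (N * k) [ZMOD (N : ℤ) ^ 2] := by
    have hdvd : ((N : ℤ) ^ 2) ∣ ((1 : ℤ) + N * k) ^ d - (1 + d * (N * k)) :=
      dvd_trans (by rw [mul_pow]; exact dvd_mul_right _ _) (aux_binom ((N : ℤ) * k) d)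
    exact (Int.modEq_iff_dvd.mpr hdvd).symm
  have hfinal : ((N : ℤ) ^ 2) ∣ (d : ℤ) * (N * k) := by
    have h4 : ((gp : ℤ)) ^ (lam * d) ≡ 1 + d * (N * k) [ZMOD (N : ℤ) ^ 2] := by
      calc ((gp : ℤ)) ^ (lam * d) = (((gp : ℤ)) ^ lam) ^ d := by rw [pow_mul]
      _ ≡ ((1 : ℤ) + N * k) ^ d [ZMOD (N : ℤ) ^ 2] := hint2.pow d
      _ ≡ 1 + d * (N * k) [ZMOD (N : ℤ) ^ 2] := hint3
    have h6 : ((gp : ℤ)) ^ (lam * d) ≡ 1 [ZMOD (N : ℤ) ^ 2] := Int.modEq_iff_dvd.mpr hint1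
    have h5 : (1 : ℤ) ≡ 1 + d * (N * k) [ZMOD (N : ℤ) ^ 2] := h6.symm.trans h4
    have := Int.modEq_iff_dvd.mp h5
    simpa using this
  have hNdk : (N : ℤ) ∣ (d : ℤ) * k := by
    have hN0' : (N : ℤ) ≠ 0 := by exact_mod_cast hN0
    have : (N : ℤ) * ((d : ℤ) * k) = (d : ℤ) * (N * k) := by ring
    rw [pow_two] at hfinal
    rw [← this] at hfinal
    exact (mul_dvd_mul_iff_left hN0').mp hfinal
  have : N ∣ d * k := by exact_mod_cast hNdk
  exact hkN.dvd_of_dvd_mul_right this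
end
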